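/- arXiv:2602.18188 — 2 statements merged into one kernel-verified Lean document; each statement's English description precedes it below -/
import Mathlib

section
/- Let r be a positive integer, let G' be a correctly gadgeted graph for parameter r, and let χ : V(G') → ℕ be a labeling that is a distance-2 coloring and is edge-consistent in every r-gball. Let v be an original vertex of G' and let w be an outer vertex adjacent to v. Then no inner vertex u in gball_r(v) satisfies χ(u) = χ(w). -/
open scoped ENNReal

namespace LCLGadget

/-- Adjacency relation (one direction) of the A-gadget, on vertex indices `0,…,5`
representing the paper's vertices `1,…,6`. -/
def AAdj (i j : Fin 6) : Prop :=
  (i, j) ∈ ([(0,1),(0,2),(1,2),(1,3),(2,4),(3,4),(3,5),(4,5)] : List (Fin 6 × Fin 6))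

variable {V : Type} [LinearOrder V]

/-- The gadget vertices of the gadgeted graph `gadget(G, x)`: a vertex `⟨(a,b,i,j), _⟩`
is vertex `j` of the `i`-th A-gadget on the expanded edge replacing the edge `{a,b}`
(oriented so that `a < b`). -/
abbrev GadgetAux (G : SimpleGraph V) (x : Sym2 V → ℕ) : Type :=
  {p : V × V × ℕ × Fin 6 //
    p.1 < p.2.1 ∧ G.Adj p.1 p.2.1 ∧ p.2.2.1 < x s(p.1, p.2.1)}

/-- Vertices of the gadgeted graph: original vertices (`Sum.inl`) and gadget
vertices (`Sum.inr`). -/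
abbrev GadgetVert (G : SimpleGraph V) (x : Sym2 V → ℕ) : Type :=
  V ⊕ GadgetAux G x

/-- Base adjacency relation of the gadgeted graph (to be symmetrized):
vertex `0` (paper's `1`) of the first gadget is joined to the smaller endpoint,
vertex `5` (paper's `6`) of the last gadget is joined to the larger endpoint,
within one gadget the A-gadget edges are used, and consecutive gadgets of a chain
are joined by an edge from vertex `5` to vertex `0`. -/
def gadgetRel (G : SimpleGraph V) (x : Sym2 V → ℕ) :
    GadgetVert G x → GadgetVert G x → Prop
  | Sum.inl sv, Sum.inr ⟨⟨a, b, i, j⟩, _⟩ =>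
      (sv = a ∧ i = 0 ∧ j = 0) ∨ (sv = b ∧ i = x s(a, b) - 1 ∧ j = 5)
  | Sum.inr ⟨⟨a, b, i, j⟩, _⟩, Sum.inr ⟨⟨a', b', i', j'⟩, _⟩ =>
      a = a' ∧ b = b' ∧ ((i = i' ∧ AAdj j j') ∨ (i' = i + 1 ∧ j = 5 ∧ j' = 0))
  | _, _ => False

/-- The gadgeted graph `G' = gadget(G, x)`. -/
def gadgetGraph (G : SimpleGraph V) (x : Sym2 V → ℕ) : SimpleGraph (GadgetVert G x) :=
  SimpleGraph.fromRel (gadgetRel G x)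

/-- Weight of a (potential) edge of the gadgeted graph: `1/2` if it is incident to an
original vertex, `0` otherwise. -/
noncomputable def wt (G : SimpleGraph V) (x : Sym2 V → ℕ) :
    GadgetVert G x → GadgetVert G x → ℝ≥0∞
  | Sum.inl _, _ => 1/2
  | _, Sum.inl _ => 1/2
  | _, _ => 0

/-- The gadgeted distance `gdist(u,v)`: the minimum total weight of a path
from `u` to `v` in the gadgeted graph. -/
noncomputable def gdist (G : SimpleGraph V) (x : Sym2 V → ℕ) (u v : GadgetVert G x) : ℝ≥0∞ :=
  ⨅ p : (gadgetGraph G x).Walk u v,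
    (p.darts.map fun d => wt G x d.toProd.1 d.toProd.2).sum

/-- Membership of a vertex `u` in the `r`-gball around `c`. -/
def inGball (G : SimpleGraph V) (x : Sym2 V → ℕ) (r : ℕ) (c u : GadgetVert G x) : Prop :=
  gdist G x c u ≤ (r : ℝ≥0∞)

/-- `u` is an original vertex of the gadgeted graph. -/
def IsOriginal (G : SimpleGraph V) (x : Sym2 V → ℕ) (u : GadgetVert G x) : Prop :=
  ∃ v : V, u = Sum.inl v

/-- `u` is an outer vertex: a gadget vertex adjacent to an original vertex. -/
def IsOuter (G : SimpleGraph V) (x : Sym2 V → ℕ) (u : GadgetVert G x) : Prop :=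
  (∃ p, u = Sum.inr p) ∧ ∃ w, IsOriginal G x w ∧ (gadgetGraph G x).Adj u w

/-- `u` is an inner vertex: a gadget vertex not adjacent to any original vertex. -/
def IsInner (G : SimpleGraph V) (x : Sym2 V → ℕ) (u : GadgetVert G x) : Prop :=
  (∃ p, u = Sum.inr p) ∧ ¬ ∃ w, IsOriginal G x w ∧ (gadgetGraph G x).Adj u w

/-- `G` is a 3-regular graph. -/
def ThreeRegular (G : SimpleGraph V) : Prop :=
  ∀ v : V, (G.neighborSet v).ncard = 3

/-- The edge labeling `x` takes positive values on all edges. -/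
def PosLabels (G : SimpleGraph V) (x : Sym2 V → ℕ) : Prop :=
  ∀ e ∈ G.edgeSet, 0 < x e

/-- `x` is a distance-`2r` edge coloring of `G`: any two distinct edges of `G` at
distance at most `2r` from each other receive distinct labels. -/
def DistEdgeColoring (G : SimpleGraph V) (x : Sym2 V → ℕ) (r : ℕ) : Prop :=
  ∀ e ∈ G.edgeSet, ∀ f ∈ G.edgeSet, e ≠ f →
    (∃ a ∈ e, ∃ b ∈ f, G.edist a b ≤ (2 * r : ℕ)) → x e ≠ x f

/-- The gadgeted graph `gadget(G,x)` is correctly gadgeted for parameter `r`. -/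
def CorrectlyGadgeted (G : SimpleGraph V) (x : Sym2 V → ℕ) (r : ℕ) : Prop :=
  ThreeRegular G ∧ PosLabels G x ∧ DistEdgeColoring G x r

/-- `χ` is a distance-2 coloring of the gadgeted graph:
it is injective on `{v} ∪ N(v)` for every vertex `v`. -/
def Dist2Coloring (G : SimpleGraph V) (x : Sym2 V → ℕ) (χ : GadgetVert G x → ℕ) : Prop :=
  ∀ v : GadgetVert G x, Set.InjOn χ (insert v ((gadgetGraph G x).neighborSet v))

/-- `χ` is edge-consistent in every `r`-gball: whenever `{v,u}` is an edge and
`v' ∈ gball_r(v)` has `χ(v') = χ(v)`, there is a neighbor `u'` of `v'` with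
`χ(u') = χ(u)`. -/
def EdgeConsistent (G : SimpleGraph V) (x : Sym2 V → ℕ) (r : ℕ)
    (χ : GadgetVert G x → ℕ) : Prop :=
  ∀ v u : GadgetVert G x, (gadgetGraph G x).Adj v u →
    ∀ v', inGball G x r v v' → χ v' = χ v →
      ∃ u', (gadgetGraph G x).Adj v' u' ∧ χ u' = χ u

/-- `u` lies on a triangle (cycle of length 3) of the gadgeted graph. -/
def OnTriangle (G : SimpleGraph V) (x : Sym2 V → ℕ) (u : GadgetVert G x) : Prop :=
  ∃ a b, (gadgetGraph G x).Adj u a ∧ (gadgetGraph G x).Adj u b ∧ (gadgetGraph G x).Adj a b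

end LCLGadget

/-!
Suppose the inner vertex `u` has the colour of the outer vertex `w` next to `v`. Edge-consistency
of the edge `w v`, read at `u`, gives a gadget neighbour `q` of `u` coloured like `v`. Every walk
from an original vertex to a gadget vertex has weight an odd multiple of `1/2`, so `q` even lies
within `r - 1/2` of `v`. Read at `q`, the three edges at `v` put the three distinct colours of the
outer neighbours of `v` on the at most three neighbours of `q`; since `q` lies on a triangle of its
A-gadget, some edge is coloured like two distinct outer neighbours `A`, `B` of `v`.

Edge-consistency of that edge, read at `A`, colours a gadget neighbour of `A` like `B`. In the
A-gadget hanging at `A` (with `A` as vertex `0`, and up to the symmetry exchanging `1, 3` with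
`2, 4`) this forces vertex `3` to take the colour of `v`, then vertex `5` the colour of `A`.
Vertex `5` would then need neighbours coloured like both gadget neighbours of `A`, but it has a
single edge leaving the gadget.
-/

namespace LCLGadget

open SimpleGraph Set

section AGadget

instance (i j : Fin 6) : Decidable (AAdj i j) := by unfold AAdj; infer_instance

def aGadget : SimpleGraph (Fin 6) := SimpleGraph.fromRel AAdj

instance : DecidableRel aGadget.Adj := fun i j => by unfold aGadget; infer_instance

lemma aGadget_connected : aGadget.Connected := by decide

lemma aGadget_exists_triangle (j : Fin 6) :
    ∃ k l, aGadget.Adj j k ∧ aGadget.Adj j l ∧ aGadget.Adj k l := by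
  revert j; decide

lemma aGadget_card_neighborFinset (j : Fin 6) :
    (aGadget.neighborFinset j).card = if j = 0 ∨ j = 5 then 2 else 3 := by
  revert j; decide

def aGadget.twist : aGadget ≃g aGadget where
  toEquiv := (Equiv.swap (1 : Fin 6) 2).trans (Equiv.swap 3 4)
  map_rel_iff' := by decide

def aGadget.flip : aGadget ≃g aGadget where
  toEquiv := Fin.revPerm
  map_rel_iff' := by decide

end AGadget

section Coloring

variable {W α : Type*} {H : SimpleGraph W} {χ : W → α}

def IsDistTwoColoring (H : SimpleGraph W) (χ : W → α) : Prop :=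
  ∀ v, InjOn χ (insert v (H.neighborSet v))

def IsEdgeConsistent (H : SimpleGraph W) (ball : W → W → Prop) (χ : W → α) : Prop :=
  ∀ v u, H.Adj v u → ∀ v', ball v v' → χ v' = χ v → ∃ u', H.Adj v' u' ∧ χ u' = χ u

lemma IsDistTwoColoring.ne_of_adj (hχ : IsDistTwoColoring H χ) {a b : W} (h : H.Adj a b) :
    χ a ≠ χ b :=
  fun he => h.ne (hχ a (mem_insert _ _) (mem_insert_of_mem _ h) he)

lemma IsDistTwoColoring.ne_of_adj_of_adj (hχ : IsDistTwoColoring H χ) {a b c : W}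
    (ha : H.Adj c a) (hb : H.Adj c b) (hab : a ≠ b) : χ a ≠ χ b :=
  fun he => hab (hχ c (mem_insert_of_mem _ ha) (mem_insert_of_mem _ hb) he)

lemma forall_exists_color_eq_of_ncard_le {s t : Set W} (ht : t.Finite)
    (hts : t.ncard ≤ s.ncard) (hs : InjOn χ s) (hst : ∀ a ∈ s, ∃ b ∈ t, χ b = χ a) :
    ∀ b ∈ t, ∃ a ∈ s, χ a = χ b := by
  have hsub : χ '' s ⊆ χ '' t := by
    rintro _ ⟨a, ha, rfl⟩
    obtain ⟨b, hb, hba⟩ := hst a ha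
    exact ⟨b, hb, hba⟩
  have heq : χ '' s = χ '' t := eq_of_subset_of_ncard_le hsub
    (calc (χ '' t).ncard ≤ t.ncard := ncard_image_le ht
      _ ≤ s.ncard := hts
      _ = (χ '' s).ncard := hs.ncard_image.symm) (ht.image χ)
  intro b hb
  exact heq.symm.subset (mem_image_of_mem χ hb)

end Coloring

section GadgetCopy

variable {W : Type*} {H : SimpleGraph W} {v : W} {f : aGadget ↪g H}

structure IsGadgetCopy (H : SimpleGraph W) (f : aGadget ↪g H) : Prop where
  subsingleton_neighborSet_diff : ∀ j, (H.neighborSet (f j) \ range f).Subsingleton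
  neighborSet_subset_range : ∀ j, j ≠ 0 → j ≠ 5 → H.neighborSet (f j) ⊆ range f

lemma range_comp_iso (f : aGadget ↪g H) (σ : aGadget ≃g aGadget) :
    range (f.comp σ.toEmbedding) = range f := by
  ext z
  simp

lemma IsGadgetCopy.comp (hf : IsGadgetCopy H f) (σ : aGadget ≃g aGadget)
    (hσ : ∀ j, j ≠ 0 → j ≠ 5 → σ j ≠ 0 ∧ σ j ≠ 5) : IsGadgetCopy H (f.comp σ.toEmbedding) := by
  refine ⟨fun j => ?_, fun j h0 h5 => ?_⟩ <;> rw [range_comp_iso]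
  · exact hf.subsingleton_neighborSet_diff (σ j)
  · exact hf.neighborSet_subset_range (σ j) (hσ j h0 h5).1 (hσ j h0 h5).2

lemma IsGadgetCopy.exists_of_adj (hf : IsGadgetCopy H f) {j : Fin 6} (h0 : j ≠ 0) (h5 : j ≠ 5)
    {z : W} (hz : H.Adj (f j) z) : ∃ k, aGadget.Adj j k ∧ f k = z := by
  obtain ⟨k, rfl⟩ := hf.neighborSet_subset_range j h0 h5 hz
  exact ⟨k, f.map_adj_iff.mp hz, rfl⟩

lemma IsGadgetCopy.finite_neighborSet_and_ncard_le (hf : IsGadgetCopy H f) (j : Fin 6) :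
    (H.neighborSet (f j)).Finite ∧ (H.neighborSet (f j)).ncard ≤ 3 := by
  have hsplit : H.neighborSet (f j) ⊆
      f '' (aGadget.neighborFinset j : Set (Fin 6)) ∪ (H.neighborSet (f j) \ range f) := by
    intro z hz
    by_cases hzf : z ∈ range f
    · obtain ⟨k, rfl⟩ := hzf
      exact Or.inl ⟨k, by simpa using f.map_adj_iff.mp hz, rfl⟩
    · exact Or.inr ⟨hz, hzf⟩
  have hext := hf.subsingleton_neighborSet_diff j
  have hfin := (((aGadget.neighborFinset j).finite_toSet).image f).union hext.finite
  refine ⟨hfin.subset hsplit, (ncard_le_ncard hsplit hfin).trans ((ncard_union_le _ _).trans ?_)⟩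
  have himage := ncard_image_le (f := f) (aGadget.neighborFinset j).finite_toSet
  rw [ncard_coe_finset, aGadget_card_neighborFinset] at himage
  by_cases hj : j = 0 ∨ j = 5
  · rw [if_pos hj] at himage
    have := (ncard_le_one_iff hext.finite).mpr fun ha hb => hext ha hb
    omega
  · rw [if_neg hj] at himage
    push Not at hj
    rw [sdiff_eq_empty.mpr (hf.neighborSet_subset_range j hj.1 hj.2), ncard_empty]
    omega

structure IsPendantGadget (H : SimpleGraph W) (v : W) (f : aGadget ↪g H) : Prop
    extends IsGadgetCopy H f where
  adj_root : H.Adj v (f 0)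
  root_notMem_range : v ∉ range f

lemma IsPendantGadget.twist (hf : IsPendantGadget H v f) :
    IsPendantGadget H v (f.comp aGadget.twist.toEmbedding) where
  toIsGadgetCopy := hf.toIsGadgetCopy.comp _ (by decide)
  adj_root := hf.adj_root
  root_notMem_range := by rw [range_comp_iso]; exact hf.root_notMem_range

end GadgetCopy

section GadgetCopyColoring

variable {W α : Type*} {H : SimpleGraph W} {ball : W → W → Prop} {χ : W → α}
  {v B : W} {f : aGadget ↪g H}

lemma IsGadgetCopy.forall_exists_color_eq (hf : IsGadgetCopy H f) (hχ : IsDistTwoColoring H χ)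
    (hc : IsEdgeConsistent H ball χ) (hv : 3 ≤ (H.neighborSet v).ncard) {j : Fin 6}
    (hball : ball v (f j)) (hχj : χ (f j) = χ v) :
    ∀ t ∈ H.neighborSet (f j), ∃ X ∈ H.neighborSet v, χ X = χ t := by
  obtain ⟨hfin, hle⟩ := hf.finite_neighborSet_and_ncard_le j
  exact forall_exists_color_eq_of_ncard_le hfin (hle.trans hv) ((hχ v).mono (subset_insert _ _))
    fun X hX => hc v X hX (f j) hball hχj

lemma IsPendantGadget.color_one_ne (hχ : IsDistTwoColoring H χ)
    (hc : IsEdgeConsistent H ball χ) (hf : IsPendantGadget H v f) (hB : H.Adj v B)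
    (hBf : B ≠ f 0) (hnear : ∀ y ∈ insert v (insert B (range f)),
      ∀ z ∈ insert v (insert B (range f)), ball y z) :
    χ (f 1) ≠ χ B := by
  intro h1
  have mem : ∀ j, f j ∈ insert v (insert B (range f)) := fun j => by simp
  have adj : ∀ i j, aGadget.Adj i j → H.Adj (f i) (f j) := fun i j => f.map_adj_iff.mpr
  have hvf : ∀ j, v ≠ f j := fun j hv => hf.root_notMem_range ⟨j, hv.symm⟩
  have hf_ne : ∀ i j, i ≠ j → f i ≠ f j := fun i j => f.injective.ne
  have h3 : χ (f 3) = χ v := by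
    obtain ⟨z, hz, hzv⟩ := hc B v hB.symm (f 1) (hnear _ (by simp) _ (mem 1)) h1
    obtain ⟨k, hk, rfl⟩ := hf.exists_of_adj (by decide) (by decide) hz
    rcases (by decide : ∀ k, aGadget.Adj 1 k → k = 0 ∨ k = 2 ∨ k = 3) k hk with rfl | rfl | rfl
    · exact absurd hzv.symm (hχ.ne_of_adj hf.adj_root)
    · exact absurd hzv (hχ.ne_of_adj_of_adj (adj 0 2 (by decide)) hf.adj_root.symm (hvf 2).symm)
    · exact hzv
  have h5 : χ (f 5) = χ (f 0) := by
    obtain ⟨z, hz, hz0⟩ := hc v (f 0) hf.adj_root (f 3) (hnear _ (by simp) _ (mem 3)) h3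
    obtain ⟨k, hk, rfl⟩ := hf.exists_of_adj (by decide) (by decide) hz
    rcases (by decide : ∀ k, aGadget.Adj 3 k → k = 1 ∨ k = 4 ∨ k = 5) k hk with rfl | rfl | rfl
    · exact absurd (h1.symm.trans hz0) (hχ.ne_of_adj_of_adj hB hf.adj_root hBf)
    · exact absurd hz0 (hχ.ne_of_adj_of_adj (adj 2 4 (by decide)) (adj 2 0 (by decide))
        (hf_ne 4 0 (by decide)))
    · exact hz0
  -- The neighbours of `f 5` coloured like `f 1` and like `f 2` both leave the copy, so coincide.
  have exit : ∀ j, aGadget.Adj 0 j → χ (f 3) ≠ χ (f j) → χ (f 4) ≠ χ (f j) →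
      ∃ y ∈ H.neighborSet (f 5) \ range f, χ y = χ (f j) := by
    intro j hj h3j h4j
    obtain ⟨y, hy, hyc⟩ := hc (f 0) (f j) (adj 0 j hj) (f 5) (hnear _ (mem 0) _ (mem 5)) h5
    refine ⟨y, ⟨hy, ?_⟩, hyc⟩
    rintro ⟨k, rfl⟩
    rcases (by decide : ∀ k, aGadget.Adj 5 k → k = 3 ∨ k = 4) k (f.map_adj_iff.mp hy)
      with rfl | rfl
    exacts [h3j hyc, h4j hyc]
  obtain ⟨y₁, hy₁, hc₁⟩ := exit 1 (by decide) (h3.trans_ne (h1 ▸ hχ.ne_of_adj hB))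
    (hχ.ne_of_adj_of_adj (adj 3 4 (by decide)) (adj 3 1 (by decide)) (hf_ne 4 1 (by decide)))
  obtain ⟨y₂, hy₂, hc₂⟩ := exit 2 (by decide)
    (h3.trans_ne (hχ.ne_of_adj_of_adj hf.adj_root.symm (adj 0 2 (by decide)) (hvf 2)))
    (hχ.ne_of_adj (adj 4 2 (by decide)))
  rw [hf.subsingleton_neighborSet_diff 5 hy₁ hy₂] at hc₁
  exact hχ.ne_of_adj_of_adj (adj 0 1 (by decide)) (adj 0 2 (by decide)) (hf_ne 1 2 (by decide))
    (hc₁.symm.trans hc₂)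

lemma IsPendantGadget.color_ne_of_adj (hχ : IsDistTwoColoring H χ)
    (hc : IsEdgeConsistent H ball χ) (hf : IsPendantGadget H v f) (hB : H.Adj v B)
    (hBf : B ≠ f 0) (hnear : ∀ y ∈ insert v (insert B (range f)),
      ∀ z ∈ insert v (insert B (range f)), ball y z)
    {p q : W} (hpq : H.Adj p q) (hp : ball p (f 0)) (hpc : χ p = χ (f 0)) :
    χ q ≠ χ B := by
  intro hq
  obtain ⟨c, hc0, hcq⟩ := hc p q hpq (f 0) hp hpc.symm
  by_cases hcf : c ∈ range f
  · obtain ⟨k, rfl⟩ := hcf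
    rcases (by decide : ∀ k, aGadget.Adj 0 k → k = 1 ∨ k = 2) k (f.map_adj_iff.mp hc0)
      with rfl | rfl
    · exact hf.color_one_ne hχ hc hB hBf hnear (hcq.trans hq)
    · refine hf.twist.color_one_ne hχ hc hB hBf ?_ (hcq.trans hq)
      rwa [range_comp_iso]
  · have hcv : c = v := hf.subsingleton_neighborSet_diff 0 ⟨hc0, hcf⟩
      ⟨hf.adj_root.symm, hf.root_notMem_range⟩
    exact hχ.ne_of_adj hB (hcv ▸ hcq.trans hq)

end GadgetCopyColoring

section GadgetGraph

open Sum

variable {V : Type} [LinearOrder V] {G : SimpleGraph V} {x : Sym2 V → ℕ}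

lemma gadgetGraph_not_adj_inl_inl (a b : V) : ¬ (gadgetGraph G x).Adj (inl a) (inl b) := by
  simp [gadgetGraph, gadgetRel]

lemma gadgetGraph_adj_inl_inr {v a b : V} {i : ℕ} {j : Fin 6}
    {h : a < b ∧ G.Adj a b ∧ i < x s(a, b)} :
    (gadgetGraph G x).Adj (inl v) (inr ⟨(a, b, i, j), h⟩) ↔
      (v = a ∧ i = 0 ∧ j = 0) ∨ (v = b ∧ i = x s(a, b) - 1 ∧ j = 5) := by
  simp [gadgetGraph, gadgetRel]

lemma gadgetGraph_adj_inr_inr {a b a' b' : V} {i i' : ℕ} {j j' : Fin 6}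
    {h : a < b ∧ G.Adj a b ∧ i < x s(a, b)} {h' : a' < b' ∧ G.Adj a' b' ∧ i' < x s(a', b')} :
    (gadgetGraph G x).Adj (inr ⟨(a, b, i, j), h⟩) (inr ⟨(a', b', i', j'), h'⟩) ↔
      a = a' ∧ b = b' ∧ ((i = i' ∧ aGadget.Adj j j') ∨ (i' = i + 1 ∧ j = 5 ∧ j' = 0) ∨
        (i = i' + 1 ∧ j = 0 ∧ j' = 5)) := by
  simp only [gadgetGraph, gadgetRel, fromRel_adj, aGadget, ne_eq, Sum.inr.injEq,
    Subtype.mk.injEq, Prod.mk.injEq]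
  constructor
  · rintro ⟨hne, ⟨rfl, rfl, ⟨rfl, h1⟩ | h1⟩ | ⟨rfl, rfl, ⟨rfl, h1⟩ | h1⟩⟩
    · exact ⟨rfl, rfl, Or.inl ⟨rfl, fun hj => hne ⟨rfl, rfl, rfl, hj⟩, Or.inl h1⟩⟩
    · exact ⟨rfl, rfl, Or.inr (Or.inl h1)⟩
    · exact ⟨rfl, rfl, Or.inl ⟨rfl, fun hj => hne ⟨rfl, rfl, rfl, hj⟩, Or.inr h1⟩⟩
    · exact ⟨rfl, rfl, Or.inr (Or.inr ⟨h1.1, h1.2.2, h1.2.1⟩)⟩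
  · rintro ⟨rfl, rfl, ⟨rfl, hne, h1 | h1⟩ | ⟨rfl, rfl, rfl⟩ | ⟨rfl, rfl, rfl⟩⟩
    · exact ⟨fun h => hne h.2.2.2, Or.inl ⟨rfl, rfl, Or.inl ⟨rfl, h1⟩⟩⟩
    · exact ⟨fun h => hne h.2.2.2, Or.inr ⟨rfl, rfl, Or.inl ⟨rfl, h1⟩⟩⟩
    · exact ⟨fun h => by omega, Or.inl ⟨rfl, rfl, Or.inr ⟨rfl, rfl, rfl⟩⟩⟩
    · exact ⟨fun h => by omega, Or.inr ⟨rfl, rfl, Or.inr ⟨rfl, rfl, rfl⟩⟩⟩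

def gadgetEmbedding (a b : V) (i : ℕ) (h : a < b ∧ G.Adj a b ∧ i < x s(a, b)) :
    aGadget ↪g gadgetGraph G x where
  toFun j := inr ⟨(a, b, i, j), h⟩
  inj' := by intro j k hjk; simpa using hjk
  map_rel_iff' {j k} := by
    change (gadgetGraph G x).Adj (inr ⟨(a, b, i, j), h⟩) (inr ⟨(a, b, i, k), h⟩) ↔ _
    simp [gadgetGraph_adj_inr_inr]

-- Forgetting the proofs lets the neighbour of a gadget outside it be named by its coordinates.
def toRaw : GadgetVert G x → V ⊕ (V × V × ℕ × Fin 6) := Sum.map id Subtype.val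

lemma toRaw_injective : Function.Injective (toRaw (G := G) (x := x)) :=
  Sum.map_injective.mpr ⟨Function.injective_id, Subtype.val_injective⟩

lemma eq_of_adj_gadgetEmbedding_of_notMem_range {a b : V} {i : ℕ}
    {h : a < b ∧ G.Adj a b ∧ i < x s(a, b)} {j : Fin 6} {z : GadgetVert G x}
    (hz : (gadgetGraph G x).Adj (gadgetEmbedding a b i h j) z)
    (hzr : z ∉ range (gadgetEmbedding a b i h)) :
    (j = 0 ∧ toRaw z = if i = 0 then inl a else inr (a, b, i - 1, 5)) ∨
      (j = 5 ∧ toRaw z = if i + 1 = x s(a, b) then inl b else inr (a, b, i + 1, 0)) := by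
  rcases z with s | ⟨⟨a', b', i', j'⟩, h'⟩
  · rcases gadgetGraph_adj_inl_inr.mp hz.symm with ⟨rfl, rfl, rfl⟩ | ⟨rfl, rfl, rfl⟩
    · simp [toRaw]
    · have := h.2.2
      right
      simp [toRaw]
      omega
  · obtain ⟨rfl, rfl, ⟨rfl, -⟩ | ⟨rfl, rfl, rfl⟩ | ⟨rfl, rfl, rfl⟩⟩ :=
      gadgetGraph_adj_inr_inr.mp hz
    · exact absurd ⟨j', rfl⟩ hzr
    · have : i + 1 < x s(a, b) := h'.2.2
      right
      simp [toRaw]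
      omega
    · left
      simp [toRaw]

lemma isGadgetCopy_gadgetEmbedding (a b : V) (i : ℕ) (h : a < b ∧ G.Adj a b ∧ i < x s(a, b)) :
    IsGadgetCopy (gadgetGraph G x) (gadgetEmbedding a b i h) where
  subsingleton_neighborSet_diff j := by
    rintro z ⟨hz, hzr⟩ z' ⟨hz', hz'r⟩
    apply toRaw_injective
    rcases eq_of_adj_gadgetEmbedding_of_notMem_range hz hzr with ⟨hj, e⟩ | ⟨hj, e⟩ <;>
      rcases eq_of_adj_gadgetEmbedding_of_notMem_range hz' hz'r with ⟨hj', e'⟩ | ⟨hj', e'⟩ <;>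
      first | exact e.trans e'.symm | exact absurd (hj.symm.trans hj') (by decide)
  neighborSet_subset_range j h0 h5 z hz := by
    by_contra hzr
    rcases eq_of_adj_gadgetEmbedding_of_notMem_range hz hzr with ⟨hj, -⟩ | ⟨hj, -⟩
    exacts [h0 hj, h5 hj]

def otherEnd (v : V) : GadgetVert G x → V
  | inl _ => v
  | inr p => if p.1.1 = v then p.1.2.1 else p.1.1

lemma ncard_neighborSet_inl (hx : PosLabels G x) (v : V) :
    ((gadgetGraph G x).neighborSet (inl v)).ncard = (G.neighborSet v).ncard := by
  refine ncard_congr (fun z _ => otherEnd v z) ?_ ?_ ?_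
  · rintro (_ | ⟨⟨a, b, i, j⟩, h⟩) hz
    · exact absurd hz (gadgetGraph_not_adj_inl_inl _ _)
    rcases gadgetGraph_adj_inl_inr.mp hz with ⟨rfl, -, -⟩ | ⟨rfl, -, -⟩
    · simpa [otherEnd] using h.2.1
    · simpa [otherEnd, h.1.ne] using h.2.1.symm
  · rintro (_ | ⟨⟨a, b, i, j⟩, h⟩) (_ | ⟨⟨a', b', i', j'⟩, h'⟩) hz hz' he
    any_goals exact absurd ‹(gadgetGraph G x).Adj _ (inl _)› (gadgetGraph_not_adj_inl_inl _ _)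
    have := h.1; have := h'.1
    rcases gadgetGraph_adj_inl_inr.mp hz with ⟨rfl, rfl, rfl⟩ | ⟨rfl, rfl, rfl⟩ <;>
      rcases gadgetGraph_adj_inl_inr.mp hz' with ⟨h1, rfl, rfl⟩ | ⟨h1, rfl, rfl⟩ <;>
      subst h1 <;> simp_all [otherEnd, ne_of_lt, ne_of_gt] <;> order
  · intro c hc
    rcases lt_or_gt_of_ne hc.ne with hlt | hlt
    · exact ⟨inr ⟨(v, c, 0, 0), hlt, hc, hx _ hc⟩,
        gadgetGraph_adj_inl_inr.mpr (Or.inl ⟨rfl, rfl, rfl⟩), by simp [otherEnd]⟩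
    · have hpos : 0 < x s(c, v) := hx _ hc.symm
      exact ⟨inr ⟨(c, v, x s(c, v) - 1, 5), hlt, hc.symm, Nat.sub_one_lt_of_lt hpos⟩,
        gadgetGraph_adj_inl_inr.mpr (Or.inr ⟨rfl, rfl, rfl⟩), by simp [otherEnd, hlt.ne]⟩

end GadgetGraph

section GadgetedDistance

open Sum

variable {V : Type} [LinearOrder V] {G : SimpleGraph V} {x : Sym2 V → ℕ} {r : ℕ}

noncomputable def walkWeight {u v : GadgetVert G x} (p : (gadgetGraph G x).Walk u v) : ℝ≥0∞ :=
  (p.darts.map fun d => wt G x d.toProd.1 d.toProd.2).sum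

@[simp] lemma walkWeight_nil {u : GadgetVert G x} :
    walkWeight (Walk.nil : (gadgetGraph G x).Walk u u) = 0 := by
  simp [walkWeight]

@[simp] lemma walkWeight_cons {u v w : GadgetVert G x} (h : (gadgetGraph G x).Adj u v)
    (p : (gadgetGraph G x).Walk v w) : walkWeight (Walk.cons h p) = wt G x u v + walkWeight p := by
  simp [walkWeight]

lemma wt_comm (u v : GadgetVert G x) : wt G x u v = wt G x v u := by
  cases u <;> cases v <;> rfl

lemma wt_of_adj {u v : GadgetVert G x} (h : (gadgetGraph G x).Adj u v) :
    (wt G x u v = 1 / 2 ∧ u.isLeft ≠ v.isLeft) ∨ (wt G x u v = 0 ∧ u.isLeft = v.isLeft) := by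
  rcases u with _ | _ <;> rcases v with _ | _
  · exact absurd h (gadgetGraph_not_adj_inl_inl _ _)
  all_goals simp [wt]

lemma exists_walkWeight_eq_div_two {u v : GadgetVert G x} (p : (gadgetGraph G x).Walk u v) :
    ∃ k : ℕ, walkWeight p = k / 2 ∧ (Even k ↔ u.isLeft = v.isLeft) := by
  induction p with
  | nil => exact ⟨0, by simp⟩
  | @cons a b c h p ih =>
    obtain ⟨k, hk, hpar⟩ := ih
    rcases wt_of_adj h with ⟨hw, hne⟩ | ⟨hw, heq⟩
    · refine ⟨k + 1, ?_, ?_⟩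
      · rw [walkWeight_cons, hk, hw, add_comm, Nat.cast_succ, ENNReal.add_div]
      · rw [Nat.even_add_one, hpar]
        revert hne
        generalize a.isLeft = s₁; generalize b.isLeft = s₂; generalize c.isLeft = s₃
        decide +revert
    · exact ⟨k, by rw [walkWeight_cons, hk, hw, zero_add], heq ▸ hpar⟩

lemma gdist_le_walkWeight {u v : GadgetVert G x} (p : (gadgetGraph G x).Walk u v) :
    gdist G x u v ≤ walkWeight p :=
  iInf_le _ p

lemma gdist_self (u : GadgetVert G x) : gdist G x u u = 0 :=
  nonpos_iff_eq_zero.mp ((gdist_le_walkWeight Walk.nil).trans_eq walkWeight_nil)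

lemma gdist_le_wt {u v : GadgetVert G x} (h : (gadgetGraph G x).Adj u v) :
    gdist G x u v ≤ wt G x u v := by
  simpa using gdist_le_walkWeight (Walk.cons h Walk.nil)

lemma gdist_inl_le {v : V} {z : GadgetVert G x} (h : (gadgetGraph G x).Adj (inl v) z) :
    gdist G x (inl v) z ≤ 1 / 2 :=
  gdist_le_wt h

lemma gdist_inr_inr_eq_zero {p q : GadgetAux G x} (h : (gadgetGraph G x).Adj (inr p) (inr q)) :
    gdist G x (inr p) (inr q) = 0 :=
  nonpos_iff_eq_zero.mp (gdist_le_wt h)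

lemma gdist_triangle (u v w : GadgetVert G x) :
    gdist G x u w ≤ gdist G x u v + gdist G x v w := by
  simp only [gdist, ENNReal.iInf_add, ENNReal.add_iInf]
  refine le_iInf₂ fun q p => iInf_le_of_le (p.append q) (le_of_eq ?_)
  simp [Walk.darts_append]

lemma gdist_le_of_gdist_eq_zero {u v w : GadgetVert G x} (h : gdist G x v w = 0) :
    gdist G x u w ≤ gdist G x u v :=
  (gdist_triangle u v w).trans_eq (by rw [h, add_zero])

lemma walkWeight_reverse {u v : GadgetVert G x} (p : (gadgetGraph G x).Walk u v) :
    walkWeight p.reverse = walkWeight p := by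
  simp only [walkWeight, Walk.darts_reverse, List.map_reverse, List.sum_reverse, List.map_map]
  congr 1
  refine List.map_congr_left fun d _ => ?_
  simp [Dart.symm_toProd, wt_comm]

lemma gdist_comm (u v : GadgetVert G x) : gdist G x u v = gdist G x v u := by
  have key : ∀ a b : GadgetVert G x, gdist G x a b ≤ gdist G x b a := fun a b =>
    le_iInf fun p => (gdist_le_walkWeight p.reverse).trans_eq (walkWeight_reverse p)
  exact (key u v).antisymm (key v u)

lemma gdist_inl_inr_add_half_le {v : V} {u : GadgetAux G x}
    (h : gdist G x (inl v) (inr u) ≤ r) : gdist G x (inl v) (inr u) + 1 / 2 ≤ r := by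
  have hhalf : ((2 * r : ℕ) : ℝ≥0∞) / 2 = r := by
    push_cast
    rw [mul_comm, ENNReal.mul_div_cancel_right two_ne_zero ENNReal.ofNat_ne_top]
  have hr : (r : ℝ≥0∞) < ((2 * r + 1 : ℕ) : ℝ≥0∞) / 2 := by
    rw [← hhalf, ENNReal.div_lt_div_iff_left two_ne_zero ENNReal.ofNat_ne_top, Nat.cast_lt]
    omega
  obtain ⟨p, hp⟩ : ∃ p, walkWeight p < ((2 * r + 1 : ℕ) : ℝ≥0∞) / 2 :=
    iInf_lt_iff.mp (h.trans_lt hr)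
  obtain ⟨k, hk, hpar⟩ := exists_walkWeight_eq_div_two p
  have hk1 : k + 1 ≤ 2 * r := by
    rw [hk, ENNReal.div_lt_div_iff_left two_ne_zero ENNReal.ofNat_ne_top, Nat.cast_lt] at hp
    have : ¬ Even k := by simpa using hpar
    grind
  calc gdist G x (inl v) (inr u) + 1 / 2 ≤ k / 2 + 1 / 2 := by
        gcongr; exact hk ▸ gdist_le_walkWeight p
    _ = ((k + 1 : ℕ) : ℝ≥0∞) / 2 := by push_cast; rw [ENNReal.add_div]
    _ ≤ ((2 * r : ℕ) : ℝ≥0∞) / 2 := by gcongr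
    _ = r := hhalf

lemma inGball_of_gdist_le_half (hr : 0 < r) {c y z : GadgetVert G x}
    (hy : gdist G x c y ≤ 1 / 2) (hz : gdist G x c z ≤ 1 / 2) : inGball G x r y z :=
  calc gdist G x y z ≤ gdist G x y c + gdist G x c z := gdist_triangle _ _ _
    _ ≤ 1 / 2 + 1 / 2 := by rw [gdist_comm]; gcongr
    _ = 1 := ENNReal.add_halves 1
    _ ≤ r := by exact_mod_cast hr

lemma inGball_of_adj_inl {v : V} {y z : GadgetVert G x} (hy : (gadgetGraph G x).Adj (inl v) y)
    (hz : gdist G x (inl v) z + 1 / 2 ≤ r) : inGball G x r y z :=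
  calc gdist G x y z ≤ gdist G x y (inl v) + gdist G x (inl v) z := gdist_triangle _ _ _
    _ ≤ r := by rw [gdist_comm, add_comm]; exact (add_le_add_right (gdist_inl_le hy) _).trans hz

end GadgetedDistance

section GadgetsOfGadgetGraph

open Sum

variable {V : Type} [LinearOrder V] {G : SimpleGraph V} {x : Sym2 V → ℕ}

lemma gdist_gadgetEmbedding_eq_zero {a b : V} {i : ℕ} (h : a < b ∧ G.Adj a b ∧ i < x s(a, b))
    (j k : Fin 6) : gdist G x (gadgetEmbedding a b i h j) (gadgetEmbedding a b i h k) = 0 := by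
  obtain ⟨w⟩ := aGadget_connected.preconnected j k
  induction w with
  | nil => exact gdist_self _
  | @cons j' k' l' hadj w ih =>
    refine nonpos_iff_eq_zero.mp ((gdist_triangle _ (gadgetEmbedding a b i h k') _).trans ?_)
    rw [ih, add_zero]
    exact (gdist_le_wt ((gadgetEmbedding a b i h).map_adj_iff.mpr hadj)).trans_eq rfl

lemma exists_isGadgetCopy_apply_eq (q : GadgetAux G x) :
    ∃ (g : aGadget ↪g gadgetGraph G x) (j : Fin 6), IsGadgetCopy (gadgetGraph G x) g ∧
      (∀ k l, gdist G x (g k) (g l) = 0) ∧ g j = inr q :=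
  ⟨_, q.1.2.2.2, isGadgetCopy_gadgetEmbedding _ _ _ q.2, gdist_gadgetEmbedding_eq_zero q.2, rfl⟩

lemma isPendantGadget_gadgetEmbedding_comp {v a b : V} {i : ℕ}
    (h : a < b ∧ G.Adj a b ∧ i < x s(a, b)) (σ : aGadget ≃g aGadget)
    (hσ : ∀ j, j ≠ 0 → j ≠ 5 → σ j ≠ 0 ∧ σ j ≠ 5)
    (hv : (gadgetGraph G x).Adj (inl v) (gadgetEmbedding a b i h (σ 0))) :
    IsPendantGadget (gadgetGraph G x) (inl v) ((gadgetEmbedding a b i h).comp σ.toEmbedding) ∧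
      ∀ j, gdist G x (inl v) (gadgetEmbedding a b i h (σ j)) ≤ 1 / 2 := by
  refine ⟨⟨(isGadgetCopy_gadgetEmbedding a b i h).comp σ hσ, hv, ?_⟩, fun j => ?_⟩
  · rintro ⟨k, hk⟩
    cases hk
  · rw [← add_zero (1 / 2 : ℝ≥0∞), ← gdist_gadgetEmbedding_eq_zero h (σ 0) (σ j)]
    exact (gdist_triangle _ _ _).trans (add_le_add_left (gdist_inl_le hv) _)

lemma exists_isPendantGadget {v : V} {X : GadgetVert G x} (hX : (gadgetGraph G x).Adj (inl v) X) :
    ∃ f : aGadget ↪g gadgetGraph G x, IsPendantGadget (gadgetGraph G x) (inl v) f ∧ f 0 = X ∧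
      ∀ j, gdist G x (inl v) (f j) ≤ 1 / 2 := by
  obtain _ | ⟨⟨a, b, i, j⟩, h⟩ := X
  · exact absurd hX (gadgetGraph_not_adj_inl_inl _ _)
  rcases gadgetGraph_adj_inl_inr.mp hX with ⟨rfl, rfl, rfl⟩ | ⟨rfl, rfl, rfl⟩
  · obtain ⟨hf, hd⟩ := isPendantGadget_gadgetEmbedding_comp h Iso.refl (by decide) hX
    exact ⟨_, hf, rfl, hd⟩
  · obtain ⟨hf, hd⟩ := isPendantGadget_gadgetEmbedding_comp h aGadget.flip (by decide) hX
    exact ⟨_, hf, rfl, hd⟩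

lemma color_inr_ne_color_inl_of_gdist_add_half_le {r : ℕ} (hr : 0 < r) (hreg : ThreeRegular G)
    (hx : PosLabels G x) {χ : GadgetVert G x → ℕ} (hχ2 : Dist2Coloring G x χ)
    (hχc : EdgeConsistent G x r χ) {v : V} {q : GadgetAux G x}
    (hq : gdist G x (inl v) (inr q) + 1 / 2 ≤ r) : χ (inr q) ≠ χ (inl v) := by
  intro hχq
  obtain ⟨g, j, hg, hg0, hgj⟩ := exists_isGadgetCopy_apply_eq q
  rw [← hgj] at hq hχq
  have hcover := hg.forall_exists_color_eq hχ2 hχc (by rw [ncard_neighborSet_inl hx, hreg v])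
    (le_self_add.trans hq) hχq
  obtain ⟨k, l, hjk, hjl, hkl⟩ := aGadget_exists_triangle j
  obtain ⟨X, hX, hχX⟩ := hcover (g k) (g.map_adj_iff.mpr hjk)
  obtain ⟨Y, hY, hχY⟩ := hcover (g l) (g.map_adj_iff.mpr hjl)
  obtain ⟨f, hf, rfl, hfv⟩ := exists_isPendantGadget hX
  have hnear : ∀ y ∈ insert (inl v) (insert Y (range f)), gdist G x (inl v) y ≤ 1 / 2 := by
    rintro y (rfl | rfl | ⟨k, rfl⟩)
    exacts [(gdist_self _).trans_le zero_le, gdist_inl_le hY, hfv k]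
  refine hf.color_ne_of_adj hχ2 hχc hY ?_ (fun y hy z hz => inGball_of_gdist_le_half hr
    (hnear y hy) (hnear z hz)) (g.map_adj_iff.mpr hkl) ?_ hχX.symm hχY.symm
  · rintro rfl
    exact IsDistTwoColoring.ne_of_adj hχ2 (g.map_adj_iff.mpr hkl) (hχX.symm.trans hχY)
  · rw [inGball, gdist_comm]
    exact inGball_of_adj_inl hX ((add_le_add_left (gdist_le_of_gdist_eq_zero (hg0 j k)) _).trans hq)

end GadgetsOfGadgetGraph

end LCLGadget

namespace LCLGadgetThms
open LCLGadget

variable {V : Type} [LinearOrder V]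

theorem stmt4_general (G : SimpleGraph V) (x : Sym2 V → ℕ) (r : ℕ) (hr : 0 < r)
    (hgad : CorrectlyGadgeted G x r)
    (χ : GadgetVert G x → ℕ)
    (hχ2 : Dist2Coloring G x χ)
    (hχc : EdgeConsistent G x r χ)
    (v : V) (w : GadgetVert G x)
    (hwadj : (gadgetGraph G x).Adj (Sum.inl v) w) :
    ∀ u : GadgetVert G x, inGball G x r (Sum.inl v) u → IsInner G x u →
      χ u ≠ χ w := by
  rintro u hu ⟨⟨p, rfl⟩, hnotOuter⟩ hχu
  have hslack := gdist_inl_inr_add_half_le hu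
  obtain ⟨q, hpq, hχq⟩ :=
    hχc w (Sum.inl v) hwadj.symm (Sum.inr p) (inGball_of_adj_inl hwadj hslack) hχu
  obtain ⟨q, rfl⟩ : ∃ q', q = Sum.inr q' := by
    rcases q with s | q'
    exacts [absurd ⟨Sum.inl s, ⟨s, rfl⟩, hpq⟩ hnotOuter, ⟨q', rfl⟩]
  refine color_inr_ne_color_inl_of_gdist_add_half_le hr hgad.1 hgad.2.1 hχ2 hχc ?_ hχq
  exact (add_le_add_left (gdist_le_of_gdist_eq_zero (gdist_inr_inr_eq_zero hpq)) _).trans hslack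

theorem stmt4 (G : SimpleGraph V) (x : Sym2 V → ℕ) (r : ℕ) (hr : 0 < r)
    (hgad : CorrectlyGadgeted G x r)
    (χ : GadgetVert G x → ℕ)
    (hχ2 : Dist2Coloring G x χ)
    (hχc : EdgeConsistent G x r χ)
    (v : V) (w : GadgetVert G x) (hwout : IsOuter G x w)
    (hwadj : (gadgetGraph G x).Adj (Sum.inl v) w) :
    ∀ u : GadgetVert G x, inGball G x r (Sum.inl v) u → IsInner G x u →
      χ u ≠ χ w :=
  stmt4_general G x r hr hgad χ hχ2 hχc v w hwadj

end LCLGadgetThms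
end

section
/- Let r be a positive integer, let G' be a correctly gadgeted graph for parameter r, and let χ : V(G') → ℕ be a labeling that is a distance-2 coloring and is edge-consistent in every r-gball. Then for every pair of distinct vertices u, v of G' belonging to the same gadget sequence, χ(u) ≠ χ(v). -/
open scoped ENNReal

/-! All gadget vertices of one expanded edge are at gadgeted distance `0` from each other, so
edge-consistency may be applied between any two of them. Number them `0, 1, …` along the edge and
suppose positions `k < k'` share a colour. Transporting the edge from `k'` to a neighbour `m < k'`
over to position `k` yields a neighbour of `k` coloured like `m`: either a smaller pair of equally
coloured positions, or the original endpoint `o` coloured like a gadget vertex near it. The latter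
is impossible: transporting the triangle through that vertex to `o` and then into the first
gadget of another expanded edge at `o` forces `o` to share a colour with one of the first five
vertices of that gadget, which the distance-2 condition and the triangles of the A-gadget forbid. -/

namespace LCLGadgetThms
open LCLGadget SimpleGraph

variable {V : Type} [LinearOrder V]

instance (i j : Fin 6) : Decidable (AAdj i j) := by unfold AAdj; infer_instance

/-- With position `6 i + j` standing for vertex `j + 1` of the `i`-th gadget of an expanded edge,
the A-gadget edges and the links between consecutive gadgets are exactly these steps. -/
def ChainStep (k k' : ℕ) : Prop := (k' = k + 1 ∧ k % 6 ≠ 2) ∨ (k' = k + 2 ∧ k % 6 < 4)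

def ChainAdj (k k' : ℕ) : Prop := ChainStep k k' ∨ ChainStep k' k

instance : DecidableRel ChainAdj := fun _ _ => by unfold ChainAdj ChainStep; infer_instance

lemma aAdj_iff_chainStep (j j' : Fin 6) : AAdj j j' ↔ ChainStep j j' := by
  revert j j'; unfold ChainStep; decide

lemma chainAdj_or_exists_common {k k' : ℕ} (hkk' : k < k')
    (h : k' ≤ k + 2 ∨ k' < k + 5 ∧ k' < 6) :
    ChainAdj k k' ∨ ∃ m ≤ k', ChainAdj m k ∧ ChainAdj m k' := by
  rcases h with h | ⟨h, h6⟩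
  · unfold ChainAdj ChainStep
    by_cases hk : k % 6 = 2
    · by_cases hk' : k' = k + 1
      · exact .inr ⟨k - 1, by omega, by omega, by omega⟩
      · omega
    · by_cases hk' : k' = k + 2 ∧ 4 ≤ k % 6
      · exact .inr ⟨k + 1, by omega, by omega, by omega⟩
      · omega
  · interval_cases k' <;> interval_cases k <;> first | omega | decide

lemma exists_chainAdj_lt {k : ℕ} (hk : 0 < k) : ∃ m < k, k ≤ m + 2 ∧ ChainAdj m k := by
  unfold ChainAdj ChainStep
  by_cases h : k % 6 = 3
  · exact ⟨k - 2, by omega, by omega, .inl (.inr ⟨by omega, by omega⟩)⟩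
  · exact ⟨k - 1, by omega, by omega, .inl (.inl ⟨by omega, by omega⟩)⟩

/-- Positions `3 q, 3 q + 1, 3 q + 2` form a triangle. -/
lemma exists_chainAdj_triangle {k n : ℕ} (hk : k < 6 * n) :
    ∃ s < 6 * n, ∃ t < 6 * n, ChainAdj k s ∧ ChainAdj k t ∧ ChainAdj s t := by
  unfold ChainAdj ChainStep
  rcases (by omega : k % 3 = 0 ∨ k % 3 = 1 ∨ k % 3 = 2) with h | h | h
  · exact ⟨k + 1, by omega, k + 2, by omega, by omega, by omega, by omega⟩
  · exact ⟨k - 1, by omega, k + 1, by omega, by omega, by omega, by omega⟩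
  · exact ⟨k - 2, by omega, k - 1, by omega, by omega, by omega, by omega⟩

section gadgetGraph

variable {G : SimpleGraph V} {x : Sym2 V → ℕ}

def chainPos (p : GadgetAux G x) : ℕ := 6 * p.1.2.2.1 + p.1.2.2.2

lemma chainPos_lt (p : GadgetAux G x) : chainPos p < 6 * x s(p.1.1, p.1.2.1) := by
  obtain ⟨⟨a, b, i, j⟩, hp⟩ := p
  have hi : i < x s(a, b) := hp.2.2
  have := j.isLt
  dsimp only [chainPos]
  omega

lemma eq_of_chainPos_eq {p q : GadgetAux G x} (h₁ : p.1.1 = q.1.1) (h₂ : p.1.2.1 = q.1.2.1)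
    (h : chainPos p = chainPos q) : p = q := by
  obtain ⟨⟨a, b, i, j⟩, hp⟩ := p
  obtain ⟨⟨a', b', i', j'⟩, hq⟩ := q
  have := j.isLt
  have := j'.isLt
  simp only [chainPos] at *
  subst h₁ h₂
  obtain rfl : i = i' := by omega
  obtain rfl : j = j' := by omega
  rfl

lemma adj_inr_inr_iff {p q : GadgetAux G x} :
    (gadgetGraph G x).Adj (.inr p) (.inr q) ↔
      p.1.1 = q.1.1 ∧ p.1.2.1 = q.1.2.1 ∧ ChainAdj (chainPos p) (chainPos q) := by
  obtain ⟨⟨a, b, i, j⟩, hp⟩ := p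
  obtain ⟨⟨a', b', i', j'⟩, hq⟩ := q
  have := j.isLt
  have := j'.isLt
  simp only [gadgetGraph, fromRel_adj, gadgetRel, aAdj_iff_chainStep, chainPos, ChainAdj,
    ChainStep, ne_eq, Sum.inr.injEq, Subtype.mk.injEq, Prod.mk.injEq, Fin.ext_iff,
    Fin.coe_ofNat_eq_mod, Nat.reduceMod]
  constructor
  · rintro ⟨-, ⟨rfl, rfl, h⟩ | ⟨rfl, rfl, h⟩⟩ <;> refine ⟨rfl, rfl, ?_⟩ <;> omega
  · rintro ⟨rfl, rfl, h | h⟩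
    · exact ⟨by omega, .inl ⟨rfl, rfl, by omega⟩⟩
    · exact ⟨by omega, .inr ⟨rfl, rfl, by omega⟩⟩

lemma adj_inl_inr_iff {v : V} {p : GadgetAux G x} :
    (gadgetGraph G x).Adj (.inl v) (.inr p) ↔
      (v = p.1.1 ∧ chainPos p = 0) ∨
        (v = p.1.2.1 ∧ chainPos p + 1 = 6 * x s(p.1.1, p.1.2.1)) := by
  obtain ⟨⟨a, b, i, j⟩, hp⟩ := p
  have hi : i < x s(a, b) := hp.2.2
  have := j.isLt
  have h₀ : i = 0 ∧ j = 0 ↔ 6 * i + j = 0 := by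
    rw [Fin.ext_iff, Fin.coe_ofNat_eq_mod, Nat.zero_mod]; omega
  have h₅ : i = x s(a, b) - 1 ∧ j = 5 ↔ 6 * i + j + 1 = 6 * x s(a, b) := by
    simp only [Fin.ext_iff, Fin.coe_ofNat_eq_mod, Nat.reduceMod]; omega
  simp only [gadgetGraph, fromRel_adj, gadgetRel, chainPos]
  rw [h₀, h₅, or_false]
  exact and_iff_right Sum.inl_ne_inr

lemma not_adj_inl_inl (v w : V) : ¬ (gadgetGraph G x).Adj (.inl v) (.inl w) := by
  simp [gadgetGraph, gadgetRel]

noncomputable def walkWeight {u v : GadgetVert G x} (p : (gadgetGraph G x).Walk u v) : ℝ≥0∞ :=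
  (p.darts.map fun d => wt G x d.toProd.1 d.toProd.2).sum

lemma wt_comm (u v : GadgetVert G x) : wt G x u v = wt G x v u := by
  cases u <;> cases v <;> rfl

lemma gdist_le_walkWeight {u v : GadgetVert G x} (p : (gadgetGraph G x).Walk u v) :
    gdist G x u v ≤ walkWeight p :=
  iInf_le _ p

lemma walkWeight_append {u v w : GadgetVert G x} (p : (gadgetGraph G x).Walk u v)
    (q : (gadgetGraph G x).Walk v w) : walkWeight (p.append q) = walkWeight p + walkWeight q := by
  simp [walkWeight, Walk.darts_append]

lemma walkWeight_reverse {u v : GadgetVert G x} (p : (gadgetGraph G x).Walk u v) :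
    walkWeight p.reverse = walkWeight p := by
  simp [walkWeight, Walk.darts_reverse, List.sum_reverse, Function.comp_def, wt_comm]

lemma gdist_self (u : GadgetVert G x) : gdist G x u u = 0 :=
  nonpos_iff_eq_zero.mp (gdist_le_walkWeight (Walk.nil : (gadgetGraph G x).Walk u u))

lemma gdist_comm (u v : GadgetVert G x) : gdist G x u v = gdist G x v u := by
  suffices h : ∀ u v : GadgetVert G x, gdist G x v u ≤ gdist G x u v from
    le_antisymm (h v u) (h u v)
  intro u v
  exact le_iInf fun p => (gdist_le_walkWeight p.reverse).trans_eq (walkWeight_reverse p)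

lemma gdist_triangle (u v w : GadgetVert G x) :
    gdist G x u w ≤ gdist G x u v + gdist G x v w := by
  simp only [gdist, ENNReal.iInf_add, ENNReal.add_iInf]
  exact le_iInf₂ fun q p => (gdist_le_walkWeight (p.append q)).trans_eq (walkWeight_append p q)

lemma gdist_le_wt_of_adj {u v : GadgetVert G x} (h : (gadgetGraph G x).Adj u v) :
    gdist G x u v ≤ wt G x u v := by
  simpa [walkWeight] using gdist_le_walkWeight (Walk.cons h Walk.nil)

lemma gdist_inr_eq_zero_of_adj {p q : GadgetAux G x}
    (h : (gadgetGraph G x).Adj (.inr p) (.inr q)) : gdist G x (.inr p) (.inr q) = 0 :=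
  nonpos_iff_eq_zero.mp (gdist_le_wt_of_adj h)

lemma gdist_inl_le_half_of_adj {o : V} {z : GadgetVert G x}
    (h : (gadgetGraph G x).Adj (.inl o) z) : gdist G x (.inl o) z ≤ 1 / 2 :=
  gdist_le_wt_of_adj h

lemma inGball_of_gdist_inl_le_half {r : ℕ} (hr : 0 < r) {o : V} {u v : GadgetVert G x}
    (hu : gdist G x (.inl o) u ≤ 1 / 2) (hv : gdist G x (.inl o) v ≤ 1 / 2) :
    inGball G x r u v :=
  calc gdist G x u v ≤ gdist G x u (.inl o) + gdist G x (.inl o) v := gdist_triangle _ _ _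
    _ ≤ 1 / 2 + 1 / 2 := add_le_add (gdist_comm u _ ▸ hu) hv
    _ = 1 := ENNReal.add_halves 1
    _ ≤ r := by exact_mod_cast hr

lemma sym2_min_max (o o' : V) : s(min o o', max o o') = s(o, o') := by
  rcases le_total o o' with h | h <;> simp [h, Sym2.eq_swap]

lemma adj_min_max {o o' : V} (h : G.Adj o o') : G.Adj (min o o') (max o o') := by
  rcases le_total o o' with h' | h' <;> simp [h', h, h.symm]

/-- Vertex number `k` of the expanded edge `{a, b}` (with `a < b`); junk value `inl a` if there
is no such vertex. -/
noncomputable def chainVert (G : SimpleGraph V) (x : Sym2 V → ℕ) (a b : V) (k : ℕ) :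
    GadgetVert G x :=
  open Classical in
  if h : a < b ∧ G.Adj a b ∧ k < 6 * x s(a, b) then
    .inr ⟨(a, b, k / 6, ⟨k % 6, Nat.mod_lt _ (by norm_num)⟩), h.1, h.2.1,
      Nat.div_lt_of_lt_mul h.2.2⟩
  else .inl a

/-- The `k`-th gadget vertex of the expanded edge `{o, o'}`, counted from `0` at the end `o`. -/
noncomputable def atDepth (G : SimpleGraph V) (x : Sym2 V → ℕ) (o o' : V) (k : ℕ) :
    GadgetVert G x :=
  chainVert G x (min o o') (max o o') (if o < o' then k else 6 * x s(o, o') - 1 - k)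

section atDepth

variable {o o' : V} {k k' : ℕ}

lemma atDepth_eq_inr (hadj : G.Adj o o') (hk : k < 6 * x s(o, o')) :
    ∃ p, atDepth G x o o' k = .inr p ∧ p.1.1 = min o o' ∧ p.1.2.1 = max o o' ∧
      chainPos p = if o < o' then k else 6 * x s(o, o') - 1 - k := by
  have hlt : min o o' < max o o' := min_lt_max.mpr hadj.ne
  have hm : (if o < o' then k else 6 * x s(o, o') - 1 - k) < 6 * x s(min o o', max o o') := by
    rw [sym2_min_max]; split_ifs <;> omega
  refine ⟨_, dif_pos ⟨hlt, adj_min_max hadj, hm⟩, rfl, rfl, Nat.div_add_mod _ 6⟩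

lemma exists_atDepth_eq (hadj : G.Adj o o') (q : GadgetAux G x) (h₁ : q.1.1 = min o o')
    (h₂ : q.1.2.1 = max o o') : ∃ k < 6 * x s(o, o'), .inr q = atDepth G x o o' k := by
  have hq := chainPos_lt q
  rw [h₁, h₂, sym2_min_max] at hq
  set k := if o < o' then chainPos q else 6 * x s(o, o') - 1 - chainPos q with hk
  have hkn : k < 6 * x s(o, o') := by split_ifs at hk <;> omega
  obtain ⟨p, hp, hp₁, hp₂, hpos⟩ := atDepth_eq_inr hadj hkn
  refine ⟨k, hkn, hp ▸ congrArg Sum.inr (eq_of_chainPos_eq (h₁.trans hp₁.symm)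
    (h₂.trans hp₂.symm) ?_)⟩
  rw [hpos]
  split_ifs at hk ⊢ <;> omega

lemma atDepth_injective (hadj : G.Adj o o') (hk : k < 6 * x s(o, o'))
    (hk' : k' < 6 * x s(o, o')) (h : atDepth G x o o' k = atDepth G x o o' k') : k = k' := by
  obtain ⟨p, hp, -, -, hpos⟩ := atDepth_eq_inr hadj hk
  obtain ⟨q, hq, -, -, hqos⟩ := atDepth_eq_inr hadj hk'
  rw [hp, hq, Sum.inr.injEq] at h
  subst h
  split_ifs at hpos hqos <;> omega

lemma atDepth_adj_atDepth_iff (hadj : G.Adj o o') (hk : k < 6 * x s(o, o'))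
    (hk' : k' < 6 * x s(o, o')) :
    (gadgetGraph G x).Adj (atDepth G x o o' k) (atDepth G x o o' k') ↔ ChainAdj k k' := by
  obtain ⟨p, hp, hp₁, hp₂, hpos⟩ := atDepth_eq_inr hadj hk
  obtain ⟨q, hq, hq₁, hq₂, hqos⟩ := atDepth_eq_inr hadj hk'
  rw [hp, hq, adj_inr_inr_iff, hp₁, hp₂, hq₁, hq₂, hpos, hqos]
  simp only [true_and]
  unfold ChainAdj ChainStep
  split_ifs <;> omega

lemma adj_inl_atDepth_iff (hadj : G.Adj o o') (hk : k < 6 * x s(o, o')) {v : V} :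
    (gadgetGraph G x).Adj (.inl v) (atDepth G x o o' k) ↔
      (v = o ∧ k = 0) ∨ (v = o' ∧ k + 1 = 6 * x s(o, o')) := by
  obtain ⟨p, hp, hp₁, hp₂, hpos⟩ := atDepth_eq_inr hadj hk
  rw [hp, adj_inl_inr_iff, hp₁, hp₂, hpos, sym2_min_max]
  rcases lt_or_gt_of_ne hadj.ne with h | h
  · rw [min_eq_left h.le, max_eq_right h.le, if_pos h]
  · have h₀ : 6 * x s(o, o') - 1 - k = 0 ↔ k + 1 = 6 * x s(o, o') := by omega
    have h₁ : 6 * x s(o, o') - 1 - k + 1 = 6 * x s(o, o') ↔ k = 0 := by omega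
    rw [min_eq_right h.le, max_eq_left h.le, if_neg (lt_asymm h), h₀, h₁, or_comm]

lemma inl_adj_atDepth_iff (hadj : G.Adj o o') (hk : k < 6 * x s(o, o')) :
    (gadgetGraph G x).Adj (.inl o) (atDepth G x o o' k) ↔ k = 0 := by
  rw [adj_inl_atDepth_iff hadj hk]
  exact ⟨fun h => h.elim And.right fun h => absurd h.1 hadj.ne, fun h => .inl ⟨rfl, h⟩⟩

lemma adj_atDepth_cases (hadj : G.Adj o o') (hk : k < 6 * x s(o, o')) {z : GadgetVert G x}
    (h : (gadgetGraph G x).Adj (atDepth G x o o' k) z) :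
    (z = .inl o ∧ k = 0) ∨ (z = .inl o' ∧ k + 1 = 6 * x s(o, o')) ∨
      ∃ k' < 6 * x s(o, o'), z = atDepth G x o o' k' ∧ ChainAdj k k' := by
  cases z with
  | inl v =>
    rcases (adj_inl_atDepth_iff hadj hk).mp h.symm with ⟨rfl, hk₀⟩ | ⟨rfl, hkn⟩
    exacts [.inl ⟨rfl, hk₀⟩, .inr (.inl ⟨rfl, hkn⟩)]
  | inr q =>
    obtain ⟨p, hp, hp₁, hp₂, -⟩ := atDepth_eq_inr hadj hk
    rw [hp] at h
    obtain ⟨h₁, h₂, -⟩ := adj_inr_inr_iff.mp h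
    obtain ⟨k', hk', hq⟩ := exists_atDepth_eq hadj q (h₁ ▸ hp₁) (h₂ ▸ hp₂)
    refine .inr (.inr ⟨k', hk', hq, (atDepth_adj_atDepth_iff hadj hk hk').mp ?_⟩)
    rwa [hp, ← hq]

lemma exists_eq_atDepth_of_inl_adj {z : GadgetVert G x} (h : (gadgetGraph G x).Adj (.inl o) z) :
    ∃ o', G.Adj o o' ∧ 0 < x s(o, o') ∧ z = atDepth G x o o' 0 := by
  cases z with
  | inl v => exact absurd h (not_adj_inl_inl o v)
  | inr q =>
    obtain ⟨o', hadj, hmin, hmax⟩ :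
        ∃ o', G.Adj o o' ∧ q.1.1 = min o o' ∧ q.1.2.1 = max o o' := by
      rcases adj_inl_inr_iff.mp h with ⟨rfl, -⟩ | ⟨rfl, -⟩
      · exact ⟨q.1.2.1, q.2.2.1, (min_eq_left q.2.1.le).symm, (max_eq_right q.2.1.le).symm⟩
      · exact ⟨q.1.1, q.2.2.1.symm, (min_eq_right q.2.1.le).symm, (max_eq_left q.2.1.le).symm⟩
    obtain ⟨k, hk, hq⟩ := exists_atDepth_eq hadj q hmin hmax
    obtain rfl : k = 0 := (inl_adj_atDepth_iff hadj hk).mp (hq ▸ h)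
    exact ⟨o', hadj, by omega, hq⟩

lemma gdist_atDepth_eq_zero_of_adj (hadj : G.Adj o o') (hk : k < 6 * x s(o, o'))
    (hk' : k' < 6 * x s(o, o'))
    (h : (gadgetGraph G x).Adj (atDepth G x o o' k) (atDepth G x o o' k')) :
    gdist G x (atDepth G x o o' k) (atDepth G x o o' k') = 0 := by
  obtain ⟨p, hp, -⟩ := atDepth_eq_inr hadj hk
  obtain ⟨q, hq, -⟩ := atDepth_eq_inr hadj hk'
  rw [hp, hq] at h ⊢
  exact gdist_inr_eq_zero_of_adj h

lemma gdist_atDepth_atDepth (hadj : G.Adj o o') (hk : k < 6 * x s(o, o'))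
    (hk' : k' < 6 * x s(o, o')) :
    gdist G x (atDepth G x o o' k) (atDepth G x o o' k') = 0 := by
  have to_zero : ∀ k < 6 * x s(o, o'),
      gdist G x (atDepth G x o o' k) (atDepth G x o o' 0) = 0 := by
    intro k
    induction k using Nat.strong_induction_on with
    | _ k ih =>
      intro hk
      rcases Nat.eq_zero_or_pos k with rfl | hpos
      · exact gdist_self _
      obtain ⟨m, hmk, -, hm⟩ := exists_chainAdj_lt hpos
      have hadj' := (atDepth_adj_atDepth_iff hadj (hmk.trans hk) hk).mpr hm
      refine nonpos_iff_eq_zero.mp ((gdist_triangle _ (atDepth G x o o' m) _).trans ?_)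
      rw [gdist_comm, gdist_atDepth_eq_zero_of_adj hadj (hmk.trans hk) hk hadj',
        ih m hmk (hmk.trans hk), add_zero]
  refine nonpos_iff_eq_zero.mp ((gdist_triangle _ (atDepth G x o o' 0) _).trans ?_)
  rw [to_zero k hk, gdist_comm, to_zero k' hk', add_zero]

lemma gdist_inl_atDepth_le (hadj : G.Adj o o') (hk : k < 6 * x s(o, o')) :
    gdist G x (.inl o) (atDepth G x o o' k) ≤ 1 / 2 := by
  have h₀ : 0 < 6 * x s(o, o') := by omega
  refine (gdist_triangle _ (atDepth G x o o' 0) _).trans ?_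
  rw [gdist_atDepth_atDepth hadj h₀ hk, add_zero]
  exact gdist_inl_le_half_of_adj ((inl_adj_atDepth_iff hadj h₀).mpr rfl)

end atDepth

section coloring

variable {r : ℕ} {χ : GadgetVert G x → ℕ}

theorem _root_.LCLGadget.Dist2Coloring.ne_of_adj (hχ : Dist2Coloring G x χ) {u v : GadgetVert G x}
    (h : (gadgetGraph G x).Adj u v) : χ u ≠ χ v :=
  fun he => h.ne (hχ u (Set.mem_insert _ _) (Set.mem_insert_of_mem _ h) he)

theorem _root_.LCLGadget.Dist2Coloring.ne_of_adj_of_adj (hχ : Dist2Coloring G x χ)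
    {w u v : GadgetVert G x} (hu : (gadgetGraph G x).Adj w u) (hv : (gadgetGraph G x).Adj w v)
    (hne : u ≠ v) : χ u ≠ χ v :=
  fun he => hne (hχ w (Set.mem_insert_of_mem _ hu) (Set.mem_insert_of_mem _ hv) he)

theorem _root_.LCLGadget.EdgeConsistent.exists_adj_ne (hχc : EdgeConsistent G x r χ)
    (hχ : Dist2Coloring G x χ) {v u v' : GadgetVert G x} (hvu : (gadgetGraph G x).Adj v u)
    (hv' : inGball G x r v v') (he : χ v' = χ v) (hne : v ≠ v') :
    ∃ u', (gadgetGraph G x).Adj v' u' ∧ χ u' = χ u ∧ u' ≠ u := by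
  obtain ⟨u', hv'u', hχu'⟩ := hχc v u hvu v' hv' he
  refine ⟨u', hv'u', hχu', ?_⟩
  intro hu
  rw [hu] at hv'u'
  exact hne (hχ u (Set.mem_insert_of_mem _ hvu.symm) (Set.mem_insert_of_mem _ hv'u'.symm) he.symm)

variable {o o' : V} {k k' : ℕ}

lemma color_atDepth_ne_of_close (hχ : Dist2Coloring G x χ) (hadj : G.Adj o o') (hkk' : k < k')
    (hk' : k' < 6 * x s(o, o')) (h : k' ≤ k + 2 ∨ k' < k + 5 ∧ k' < 6) :
    χ (atDepth G x o o' k) ≠ χ (atDepth G x o o' k') := by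
  have hk := hkk'.trans hk'
  rcases chainAdj_or_exists_common hkk' h with h | ⟨m, hm, hmk, hmk'⟩
  · exact hχ.ne_of_adj ((atDepth_adj_atDepth_iff hadj hk hk').mpr h)
  · have hm' := hm.trans_lt hk'
    exact hχ.ne_of_adj_of_adj ((atDepth_adj_atDepth_iff hadj hm' hk).mpr hmk)
      ((atDepth_adj_atDepth_iff hadj hm' hk').mpr hmk')
      fun he => hkk'.ne (atDepth_injective hadj hk hk' he)

lemma color_inl_ne_atDepth_of_le_two (hχ : Dist2Coloring G x χ) (hadj : G.Adj o o')
    (hk : k < 6 * x s(o, o')) (hk₂ : k ≤ 2) : χ (.inl o) ≠ χ (atDepth G x o o' k) := by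
  have h₀ : 0 < 6 * x s(o, o') := by omega
  have ho₀ := (inl_adj_atDepth_iff hadj h₀).mpr rfl
  rcases Nat.eq_zero_or_pos k with rfl | hpos
  · exact hχ.ne_of_adj ho₀
  · obtain ⟨p, hp, -⟩ := atDepth_eq_inr hadj hk
    refine hχ.ne_of_adj_of_adj ho₀.symm ((atDepth_adj_atDepth_iff hadj h₀ hk).mpr ?_)
      (hp ▸ Sum.inl_ne_inr)
    unfold ChainAdj ChainStep
    omega

lemma color_atDepth_zero_ne_five (hr : 0 < r) (hχ : Dist2Coloring G x χ)
    (hχc : EdgeConsistent G x r χ) (hadj : G.Adj o o') (hx : 0 < x s(o, o')) :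
    χ (atDepth G x o o' 0) ≠ χ (atDepth G x o o' 5) := by
  intro h
  have hn : 6 ≤ 6 * x s(o, o') := by omega
  have adj : ∀ k k', k ≤ 5 ∧ k' ≤ 5 ∧ ChainAdj k k' →
      (gadgetGraph G x).Adj (atDepth G x o o' k) (atDepth G x o o' k') :=
    fun _ _ h => (atDepth_adj_atDepth_iff hadj (by omega) (by omega)).mpr h.2.2
  have hball : inGball G x r (atDepth G x o o' 0) (atDepth G x o o' 5) :=
    inGball_of_gdist_inl_le_half hr (gdist_inl_atDepth_le hadj (by omega))
      (gdist_inl_atDepth_le hadj (by omega))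
  -- Depth `5` has a single neighbour outside the end gadget; the partners of depths `1` and `2`
  -- must both be that neighbour.
  have beyond : ∀ z, (gadgetGraph G x).Adj (atDepth G x o o' 5) z → z ≠ atDepth G x o o' 3 →
      z ≠ atDepth G x o o' 4 → (z = atDepth G x o o' 6 ∧ 6 < 6 * x s(o, o')) ∨
        (z = .inl o' ∧ 6 * x s(o, o') = 6) := by
    intro z hz hz₃ hz₄
    rcases adj_atDepth_cases hadj (by omega) hz with ⟨-, h⟩ | ⟨rfl, h⟩ | ⟨k, hk, rfl, h⟩
    · omega
    · exact .inr ⟨rfl, by omega⟩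
    · have : k = 3 ∨ k = 4 ∨ k = 6 := by unfold ChainAdj ChainStep at h; omega
      rcases this with rfl | rfl | rfl
      exacts [absurd rfl hz₃, absurd rfl hz₄, .inl ⟨rfl, hk⟩]
  obtain ⟨α, hα, hχα⟩ := hχc _ _ (adj 0 1 (by decide)) _ hball h.symm
  obtain ⟨β, hβ, hχβ⟩ := hχc _ _ (adj 0 2 (by decide)) _ hball h.symm
  have hαβ : α = β := by
    rcases beyond α hα (fun h => hχ.ne_of_adj (adj 1 3 (by decide)) (h ▸ hχα).symm)
        (fun h => color_atDepth_ne_of_close hχ hadj (by omega) (by omega) (by omega)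
          (h ▸ hχα).symm) with ⟨rfl, h₁⟩ | ⟨rfl, h₁⟩ <;>
    rcases beyond β hβ
        (fun h => color_atDepth_ne_of_close hχ hadj (by omega) (by omega) (by omega)
          (h ▸ hχβ).symm)
        (fun h => hχ.ne_of_adj (adj 2 4 (by decide)) (h ▸ hχβ).symm)
      with ⟨rfl, h₂⟩ | ⟨rfl, h₂⟩
    all_goals first | rfl | omega
  exact hχ.ne_of_adj (adj 1 2 (by decide)) (hχα.symm.trans (hαβ ▸ hχβ))

lemma color_inl_ne_atDepth_of_le_four (hr : 0 < r) (hχ : Dist2Coloring G x χ)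
    (hχc : EdgeConsistent G x r χ) (hadj : G.Adj o o') (hx : 0 < x s(o, o')) (hk₄ : k ≤ 4) :
    χ (.inl o) ≠ χ (atDepth G x o o' k) := by
  have hk : k < 6 * x s(o, o') := by omega
  by_cases hk₂ : k ≤ 2
  · exact color_inl_ne_atDepth_of_le_two hχ hadj hk hk₂
  intro h
  have h₀ : 0 < 6 * x s(o, o') := by omega
  obtain ⟨π, hπ, hχπ⟩ := hχc _ _ ((inl_adj_atDepth_iff hadj h₀).mpr rfl) _
    (inGball_of_gdist_inl_le_half hr ((gdist_self _).trans_le zero_le)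
      (gdist_inl_atDepth_le hadj hk)) h.symm
  rcases adj_atDepth_cases hadj hk hπ with ⟨-, h⟩ | ⟨-, h⟩ | ⟨k', hk', rfl, hkk'⟩
  · omega
  · omega
  · unfold ChainAdj ChainStep at hkk'
    by_cases hk'₅ : k' = 5
    · subst hk'₅
      exact color_atDepth_zero_ne_five hr hχ hχc hadj hx hχπ.symm
    · exact color_atDepth_ne_of_close hχ hadj (by omega) hk' (by omega) hχπ.symm

lemma color_inl_ne_atDepth (hr : 0 < r) (hχ : Dist2Coloring G x χ)
    (hχc : EdgeConsistent G x r χ) (hadj : G.Adj o o') (hk : k < 6 * x s(o, o')) :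
    χ (.inl o) ≠ χ (atDepth G x o o' k) := by
  intro h
  obtain ⟨s, hs, t, ht, hks, hkt, hst⟩ := exists_chainAdj_triangle hk
  have near := fun {j} (hj : j < 6 * x s(o, o')) => gdist_inl_atDepth_le hadj hj
  obtain ⟨s', hos', hχs'⟩ := hχc _ _ ((atDepth_adj_atDepth_iff hadj hk hs).mpr hks) _
    (inGball_of_gdist_inl_le_half hr (near hk) ((gdist_self _).trans_le zero_le)) h
  obtain ⟨t', hot', hχt'⟩ := hχc _ _ ((atDepth_adj_atDepth_iff hadj hk ht).mpr hkt) _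
    (inGball_of_gdist_inl_le_half hr (near hk) ((gdist_self _).trans_le zero_le)) h
  obtain ⟨o'', hadj'', hx'', rfl⟩ := exists_eq_atDepth_of_inl_adj hos'
  have near'' := fun {j} (hj : j < 6 * x s(o, o'')) => gdist_inl_atDepth_le hadj'' hj
  obtain ⟨z, hz, hχz⟩ := hχc _ _ ((atDepth_adj_atDepth_iff hadj hs ht).mpr hst) _
    (inGball_of_gdist_inl_le_half hr (near hs) (near'' (by omega))) hχs'
  rcases adj_atDepth_cases hadj'' (by omega) hz with
    ⟨rfl, -⟩ | ⟨-, h⟩ | ⟨k₁, hk₁, rfl, h₀₁⟩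
  · exact hχ.ne_of_adj hot' (hχz.trans hχt'.symm)
  · omega
  have hk₁₂ : 1 ≤ k₁ ∧ k₁ ≤ 2 := by unfold ChainAdj ChainStep at h₀₁; omega
  obtain ⟨ω, hω, hχω⟩ := hχc _ _ hot'.symm _
    (inGball_of_gdist_inl_le_half hr (gdist_inl_le_half_of_adj hot') (near'' hk₁))
    (hχz.trans hχt'.symm)
  rcases adj_atDepth_cases hadj'' hk₁ hω with
    ⟨-, h⟩ | ⟨-, h⟩ | ⟨k₂, -, rfl, h₁₂⟩
  · omega
  · omega
  · unfold ChainAdj ChainStep at h₁₂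
    exact color_inl_ne_atDepth_of_le_four hr hχ hχc hadj'' hx'' (by omega) hχω.symm

theorem color_atDepth_ne_of_lt (hr : 0 < r) (hχ : Dist2Coloring G x χ)
    (hχc : EdgeConsistent G x r χ) (hadj : G.Adj o o') (hkk' : k < k')
    (hk' : k' < 6 * x s(o, o')) : χ (atDepth G x o o' k) ≠ χ (atDepth G x o o' k') := by
  induction k' using Nat.strong_induction_on generalizing k with
  | _ k' ih =>
    intro h
    by_cases hclose : k' ≤ k + 2
    · exact color_atDepth_ne_of_close hχ hadj hkk' hk' (.inl hclose) h
    have hk := hkk'.trans hk'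
    obtain ⟨m, hmk', -, hm⟩ := exists_chainAdj_lt (by omega : 0 < k')
    have hm' := hmk'.trans hk'
    obtain ⟨w, hw, hχw, hwm⟩ := hχc.exists_adj_ne hχ
      ((atDepth_adj_atDepth_iff hadj hm' hk').mpr hm).symm
      ((gdist_atDepth_atDepth hadj hk' hk).trans_le zero_le) h
      fun he => hkk'.ne (atDepth_injective hadj hk hk' he.symm)
    rcases adj_atDepth_cases hadj hk hw with ⟨rfl, -⟩ | ⟨-, h⟩ | ⟨l, hl, rfl, hkl⟩
    · exact color_inl_ne_atDepth hr hχ hχc hadj hm' hχw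
    · omega
    · have hlm : l ≠ m := fun h => hwm (h ▸ rfl)
      have hlk' : l < k' := by unfold ChainAdj ChainStep at hkl; omega
      rcases lt_or_gt_of_ne hlm with hlt | hlt
      · exact ih m hmk' hlt hm' hχw
      · exact ih l hlk' hlt hl hχw.symm

end coloring

end gadgetGraph

theorem stmt5_general (G : SimpleGraph V) (x : Sym2 V → ℕ) (r : ℕ) (hr : 0 < r)
    (χ : GadgetVert G x → ℕ)
    (hχ2 : Dist2Coloring G x χ)
    (hχc : EdgeConsistent G x r χ) :
    ∀ p q : GadgetAux G x, p ≠ q →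
      p.val.1 = q.val.1 → p.val.2.1 = q.val.2.1 →
      χ (Sum.inr p) ≠ χ (Sum.inr q) := by
  intro p q hpq h₁ h₂
  have hadj : G.Adj p.1.1 p.1.2.1 := p.2.2.1
  have hmin : p.1.1 = min p.1.1 p.1.2.1 := (min_eq_left p.2.1.le).symm
  have hmax : p.1.2.1 = max p.1.1 p.1.2.1 := (max_eq_right p.2.1.le).symm
  obtain ⟨k, hk, hp⟩ := exists_atDepth_eq hadj p hmin hmax
  obtain ⟨k', hk', hq⟩ := exists_atDepth_eq hadj q (h₁ ▸ hmin) (h₂ ▸ hmax)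
  have hkk' : k ≠ k' := by
    rintro rfl
    exact hpq (Sum.inr_injective (hp.trans hq.symm))
  rw [hp, hq]
  rcases lt_or_gt_of_ne hkk' with h | h
  · exact color_atDepth_ne_of_lt hr hχ2 hχc hadj h hk'
  · exact (color_atDepth_ne_of_lt hr hχ2 hχc hadj h hk).symm

theorem stmt5 (G : SimpleGraph V) (x : Sym2 V → ℕ) (r : ℕ) (hr : 0 < r)
    (hgad : CorrectlyGadgeted G x r)
    (χ : GadgetVert G x → ℕ)
    (hχ2 : Dist2Coloring G x χ)
    (hχc : EdgeConsistent G x r χ) :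
    ∀ p q : GadgetAux G x, p ≠ q →
      p.val.1 = q.val.1 → p.val.2.1 = q.val.2.1 →
      χ (Sum.inr p) ≠ χ (Sum.inr q) :=
  stmt5_general G x r hr χ hχ2 hχc

end LCLGadgetThms
end
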